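/- Let X be a reflexive real Banach space, Ψ : X → ℝ sequentially weakly continuous, J(u) = ‖u‖²/2 − Ψ(u), and ρ₀ > 0. Suppose there exists w with ‖w‖ ≤ ρ₀ such that Ψ(u) < Ψ(w) + (ρ₀² − ‖w‖²)/2 for all u with ‖u‖ ≤ ρ₀. If u₀ minimizes J over the closed ball of radius ρ₀ (such a minimizer exists), then ‖u₀‖ < ρ₀, i.e., u₀ lies in the open ball and is a local minimum of J on X. -/
import Mathlib

open Metric Filter

/-- If Ψ is sequentially weakly continuous and satisfies the strict ball estimate with
respect to some w, then any minimizer u₀ of J(u) = ‖u‖²/2 − Ψ(u) over the closed ball of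
radius ρ₀ lies in the open ball. -/
theorem stmt11 {X : Type*} [NormedAddCommGroup X] [NormedSpace ℝ X] [CompleteSpace X]
    (hrefl : ∀ (u : ℕ → X) (C : ℝ), (∀ n, ‖u n‖ ≤ C) →
      ∃ (φ : ℕ → ℕ) (x : X), StrictMono φ ∧ ‖x‖ ≤ C ∧
        ∀ ℓ : X →L[ℝ] ℝ, Tendsto (fun n => ℓ (u (φ n))) atTop (nhds (ℓ x)))
    (Ψ : X → ℝ)
    (hwc : ∀ (u : ℕ → X) (x : X),
      (∀ ℓ : X →L[ℝ] ℝ, Tendsto (fun n => ℓ (u n)) atTop (nhds (ℓ x))) →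
      Tendsto (fun n => Ψ (u n)) atTop (nhds (Ψ x)))
    (ρ₀ : ℝ) (hρ₀ : 0 < ρ₀)
    (w : X) (hw : ‖w‖ ≤ ρ₀)
    (hstrict : ∀ u : X, ‖u‖ ≤ ρ₀ → Ψ u < Ψ w + (ρ₀ ^ 2 - ‖w‖ ^ 2) / 2)
    (u₀ : X) (hu₀ : ‖u₀‖ ≤ ρ₀)
    (hmin : ∀ u : X, ‖u‖ ≤ ρ₀ →
      ‖u₀‖ ^ 2 / 2 - Ψ u₀ ≤ ‖u‖ ^ 2 / 2 - Ψ u) :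
    ‖u₀‖ < ρ₀ := by
  by_contra h
  push_neg at h
  have heq : ‖u₀‖ = ρ₀ := le_antisymm hu₀ h
  have h1 := hstrict u₀ hu₀
  have h2 := hmin w hw
  rw [heq] at h2
  linarith
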